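/- For every integer h ≥ 3 there exists N₃ ∈ ℕ, depending only on h, such that for all integers N ≥ N₃ there exist real numbers b, d with 0 < b < d and an integer k with 1 ≤ k ≤ N−1 such that F( cos(2πk/N), T_h(cos(2πk/N)), b, d ) < 0. -/
import Mathlib

open Real

noncomputable def F (x y b d : ℝ) : ℝ :=
  -b*d*x^2 + (b*d^2*y - b*(b+d) - d*(b+1)*(b+2*d))*x + b*d*(b+d)*y + (b+1)*(b+d)*(b+2*d)

noncomputable def cheb (h : ℕ) (x : ℝ) : ℝ := (Polynomial.Chebyshev.T ℝ h).eval x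

lemma cheb_cos (h : ℕ) (θ : ℝ) : cheb h (cos θ) = cos (h * θ) := by
  have := Polynomial.Chebyshev.T_real_cos θ (h:ℤ)
  unfold cheb
  push_cast at this ⊢
  exact this

lemma g_cont (h : ℕ) : Continuous (fun θ : ℝ => F (cos θ) (cos (h * θ)) 3 100) := by
  unfold F
  continuity

lemma g_neg (h : ℕ) (hh : 3 ≤ h) : F (cos (π / h)) (cos (h * (π / h))) 3 100 < 0 := by
  have hh0 : (0:ℝ) < h := by exact_mod_cast Nat.lt_of_lt_of_le (by norm_num) hh
  have h1 : (h:ℝ) * (π / h) = π := by field_simp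
  rw [h1, cos_pi]
  have h3 : (3:ℝ) ≤ h := by exact_mod_cast hh
  have hle : π / h ≤ π / 3 := by
    apply div_le_div_of_nonneg_left pi_pos.le (by norm_num) h3
  have hge : (0:ℝ) ≤ π / h := by positivity
  have h2 : (1:ℝ)/2 ≤ cos (π / h) := by
    rw [← Real.cos_pi_div_three]
    apply Real.cos_le_cos_of_nonneg_of_le_pi hge (by linarith [pi_pos]) hle
  have h4 : cos (π / h) ≤ 1 := cos_le_one _
  set x := cos (π / h)
  unfold F
  nlinarith [sq_nonneg x]

/-- Theorem (continuous bifurcation, instability part): for every `h ≥ 3` and all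
sufficiently large `N`, there exist parameters `0 < b < d` and a nonzero mode `k`
which is linearly unstable. -/
theorem continuous_bifurcation_instability (h : ℕ) (hh : 3 ≤ h) :
    ∃ N₃ : ℕ, ∀ N : ℕ, N₃ ≤ N →
      ∃ b d : ℝ, 0 < b ∧ b < d ∧
        ∃ k : ℕ, 1 ≤ k ∧ k ≤ N - 1 ∧
          F (cos (2*π*k/N)) (cheb h (cos (2*π*k/N))) b d < 0 := by
  have hh0 : (0:ℝ) < h := by exact_mod_cast Nat.lt_of_lt_of_le (by norm_num) hh
  set g : ℝ → ℝ := fun θ => F (cos θ) (cos (h * θ)) 3 100 with hgdef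
  have hne : g (π / h) < 0 := g_neg h hh
  have hev : ∀ᶠ θ in nhds (π / h), g θ < 0 :=
    ((g_cont h).continuousAt).eventually_lt_const hne
  obtain ⟨ε, hε, hball⟩ := Metric.eventually_nhds_iff.mp hev
  refine ⟨max (2*h + 1) (⌈2*π/ε⌉₊ + 1), fun N hN => ⟨3, 100, by norm_num, by norm_num, ?_⟩⟩
  have hN1 : 2*h + 1 ≤ N := le_trans (le_max_left _ _) hN
  have hN2 : ⌈2*π/ε⌉₊ + 1 ≤ N := le_trans (le_max_right _ _) hN
  have hNpos : 0 < N := by omega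
  have hNR : (0:ℝ) < N := by exact_mod_cast hNpos
  refine ⟨N / (2*h), ?_, ?_, ?_⟩
  · exact (Nat.one_le_div_iff (by omega)).mpr (by omega)
  · have : N / (2*h) < N := Nat.div_lt_self hNpos (by omega)
    omega
  · set k := N / (2*h) with hk
    have hmod := Nat.div_add_mod N (2*h)
    have hr : N % (2*h) < 2*h := Nat.mod_lt _ (by omega)
    -- real versions
    have hkR : (N:ℝ) = 2*(h:ℝ)*(k:ℝ) + ((N % (2*h) : ℕ) : ℝ) := by
      exact_mod_cast hmod.symm
    have hrR : ((N % (2*h) : ℕ) : ℝ) < 2*h := by exact_mod_cast hr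
    have hrR0 : (0:ℝ) ≤ ((N % (2*h) : ℕ) : ℝ) := by positivity
    have hdist : dist (2*π*k/N) (π/h) < ε := by
      rw [Real.dist_eq]
      have hdiff : 2*π*k/N - π/h = -(π * ((N % (2*h) : ℕ) : ℝ) / (N * h)) := by
        field_simp
        nlinarith [hkR, pi_pos]
      rw [hdiff, abs_neg, abs_of_nonneg (by positivity)]
      have h1 : π * ((N % (2*h) : ℕ) : ℝ) / (N * h) < 2*π/N := by
        rw [div_lt_div_iff₀ (by positivity) hNR]
        have : π * ((N % (2*h) : ℕ) : ℝ) < π * (2*h) := by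
          exact (mul_lt_mul_iff_right₀ pi_pos).mpr hrR
        nlinarith [pi_pos]
      have h2 : 2*π/N < ε := by
        rw [div_lt_iff₀ hNR]
        have hlt : 2*π/ε < N := by
          have := Nat.le_ceil (2*π/ε)
          have hN2R : (⌈2*π/ε⌉₊ : ℝ) + 1 ≤ N := by exact_mod_cast hN2
          linarith
        have := (div_lt_iff₀ hε).mp hlt
        linarith
      linarith
    have := hball hdist
    rw [hgdef] at this
    simp only [cheb_cos]
    convert this using 3 <;> ring
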